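/- Let f(z) = ∑_{n≥0} a_n z^n be in the class K with radius of convergence R > 0; assume that f is not a polynomial and that M_f = lim_{t↑R} m_f(t) = +∞. Then limsup_{t↑R} σ_f(t)/m_f(t) ≥ (Ḡ(f) − 1)/(Ḡ(f) + 1); equivalently, for every real c ≥ 1 such that limsup_{k→∞} n_{k+1}/n_k ≥ c, one has limsup_{t↑R} σ_f(t)/m_f(t) ≥ (c − 1)/(c + 1). -/

import Mathlib

open Filter Topology MeasureTheory
open scoped ENNReal NNReal Classical

noncomputable section

/-- `psum a t = ∑ aₙ tⁿ`, the value `f(t)` of the power series with coefficients `a`. -/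
def psum (a : ℕ → ℝ) (t : ℝ) : ℝ := ∑' n : ℕ, a n * t ^ n

/-- The mean `m_f(t)` of the Khinchin family of the power series with coefficients `a`. -/
def meanK (a : ℕ → ℝ) (t : ℝ) : ℝ :=
  (∑' n : ℕ, (n : ℝ) * a n * t ^ n) / ∑' n : ℕ, a n * t ^ n

/-- The variance `σ_f²(t)` of the Khinchin family. -/
def varK (a : ℕ → ℝ) (t : ℝ) : ℝ :=
  (∑' n : ℕ, (n : ℝ) ^ 2 * a n * t ^ n) / (∑' n : ℕ, a n * t ^ n) - meanK a t ^ 2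

/-- The standard deviation `σ_f(t)` of the Khinchin family. -/
def sdK (a : ℕ → ℝ) (t : ℝ) : ℝ := Real.sqrt (varK a t)

/-- The moment `E(X_t^p)` of real exponent `p` of the Khinchin family. -/
def momK (a : ℕ → ℝ) (p : ℝ) (t : ℝ) : ℝ :=
  (∑' n : ℕ, (n : ℝ) ^ p * a n * t ^ n) / ∑' n : ℕ, a n * t ^ n

/-- The filter of `t ↑ R`: `atTop` when `R = ∞`, and `𝓝[<] R` when `R < ∞`. -/
def nhdsUpto (R : ℝ≥0∞) : Filter ℝ :=
  if R = ⊤ then atTop else nhdsWithin R.toReal (Set.Iio R.toReal)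

/-!
At a gap `m < n` of the support (no `aⱼ ≠ 0` with `m < j < n`) the Khinchin variable `X_t`
takes no value strictly between `m` and `n`. Since `m_f` is continuous and tends to `∞`, for
every far-out gap there is a radius `τ`, as close to `R` as we like, where `m_f(τ) = (m + n)/2`;
there `X_τ` stays at distance `≥ (n - m)/2` from its mean, so
`σ_f(τ)/m_f(τ) ≥ (n - m)/(n + m) ≥ (c - 1)/(c + 1)` whenever `n ≥ c·m`.
-/

section PowerSeries

variable {a : ℕ → ℝ} {t : ℝ}

lemma summable_pow_mul_mul_pow_of_lt (hpos : ∀ n, 0 ≤ a n) {s : ℝ}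
    (hs : Summable fun n => a n * s ^ n) (ht : 0 ≤ t) (hts : t < s) (k : ℕ) :
    Summable fun n : ℕ => (n : ℝ) ^ k * a n * t ^ n := by
  have hs0 : 0 < s := ht.trans_lt hts
  have hbound : ∀ n, a n * s ^ n ≤ ∑' n, a n * s ^ n := fun n =>
    hs.le_tsum n fun m _ => mul_nonneg (hpos m) (by positivity)
  have hratio : ‖t / s‖ < 1 := by
    rw [Real.norm_of_nonneg (by positivity)]
    exact (div_lt_one hs0).mpr hts
  refine .of_nonneg_of_le (fun n => by have := hpos n; positivity) (fun n => ?_)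
    ((summable_pow_mul_geometric_of_norm_lt_one k hratio).mul_left (∑' n, a n * s ^ n))
  calc (n : ℝ) ^ k * a n * t ^ n = (a n * s ^ n) * ((n : ℝ) ^ k * (t / s) ^ n) := by
        rw [div_pow]
        field_simp
    _ ≤ _ := by gcongr; exact hbound n

lemma tsum_mul_pow_pos (hpos : ∀ n, 0 ≤ a n) (ha0 : 0 < a 0)
    (hs : Summable fun n => a n * t ^ n) (ht : 0 ≤ t) : 0 < ∑' n, a n * t ^ n :=
  ha0.trans_le <| by
    simpa using hs.le_tsum 0 fun m _ => mul_nonneg (hpos m) (pow_nonneg ht m)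

lemma continuousOn_tsum_mul_pow (hpos : ∀ n, 0 ≤ a n) {s : ℝ}
    (hs : Summable fun n => a n * s ^ n) :
    ContinuousOn (fun t => ∑' n, a n * t ^ n) (Set.Icc 0 s) := by
  refine continuousOn_tsum (fun n => (continuous_const.mul (continuous_pow n)).continuousOn)
    hs fun n x hx => ?_
  rw [Real.norm_of_nonneg (mul_nonneg (hpos n) (pow_nonneg hx.1 n))]
  exact mul_le_mul_of_nonneg_left (pow_le_pow_left₀ hx.1 hx.2 n) (hpos n)

lemma meanK_continuousOn (hpos : ∀ n, 0 ≤ a n) (ha0 : 0 < a 0) {s : ℝ}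
    (hs : Summable fun n => a n * s ^ n) (hs' : Summable fun n : ℕ => (n : ℝ) * a n * s ^ n) :
    ContinuousOn (meanK a) (Set.Icc 0 s) := by
  have hden : ∀ t ∈ Set.Icc 0 s, ∑' n, a n * t ^ n ≠ 0 := fun t ht =>
    have hsum : Summable fun n => a n * t ^ n :=
      hs.of_nonneg_of_le (fun n => mul_nonneg (hpos n) (pow_nonneg ht.1 n)) fun n =>
        mul_le_mul_of_nonneg_left (pow_le_pow_left₀ ht.1 ht.2 n) (hpos n)
    (tsum_mul_pow_pos hpos ha0 hsum ht.1).ne'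
  exact (continuousOn_tsum_mul_pow (fun n => mul_nonneg n.cast_nonneg (hpos n)) hs').div
    (continuousOn_tsum_mul_pow hpos hs) hden

lemma hasSum_sq_sub_mul (s0 : Summable fun k => a k * t ^ k)
    (s1 : Summable fun k : ℕ => (k : ℝ) * a k * t ^ k)
    (s2 : Summable fun k : ℕ => (k : ℝ) ^ 2 * a k * t ^ k) (μ : ℝ) :
    HasSum (fun k : ℕ => ((k : ℝ) - μ) ^ 2 * (a k * t ^ k))
      (∑' k : ℕ, (k : ℝ) ^ 2 * a k * t ^ k - 2 * μ * ∑' k : ℕ, (k : ℝ) * a k * t ^ k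
        + μ ^ 2 * ∑' k, a k * t ^ k) :=
  ((s2.hasSum.sub (s1.hasSum.mul_left (2 * μ))).add (s0.hasSum.mul_left (μ ^ 2))).congr_fun
    fun k => by ring

lemma le_varK_of_forall_le_sq (hpos : ∀ n, 0 ≤ a n) (ht : 0 ≤ t)
    (s0 : Summable fun k => a k * t ^ k) (s1 : Summable fun k : ℕ => (k : ℝ) * a k * t ^ k)
    (s2 : Summable fun k : ℕ => (k : ℝ) ^ 2 * a k * t ^ k) (hS0 : 0 < ∑' k, a k * t ^ k)
    {d : ℝ} (hd : ∀ k, a k ≠ 0 → d ≤ ((k : ℝ) - meanK a t) ^ 2) : d ≤ varK a t := by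
  have hle : d * ∑' k, a k * t ^ k ≤ ∑' k : ℕ, (k : ℝ) ^ 2 * a k * t ^ k
      - 2 * meanK a t * ∑' k : ℕ, (k : ℝ) * a k * t ^ k + meanK a t ^ 2 * ∑' k, a k * t ^ k := by
    refine hasSum_le (fun k => ?_) (s0.hasSum.mul_left d) (hasSum_sq_sub_mul s0 s1 s2 _)
    by_cases hak : a k = 0
    · simp [hak]
    · exact mul_le_mul_of_nonneg_right (hd k hak) (mul_nonneg (hpos k) (pow_nonneg ht k))
  have hvar : varK a t * ∑' k, a k * t ^ k = ∑' k : ℕ, (k : ℝ) ^ 2 * a k * t ^ k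
      - 2 * meanK a t * ∑' k : ℕ, (k : ℝ) * a k * t ^ k + meanK a t ^ 2 * ∑' k, a k * t ^ k := by
    simp only [varK, meanK]
    field_simp
    ring
  exact le_of_mul_le_mul_right (hvar ▸ hle) hS0

lemma sq_half_sub_le_varK_of_gap (hpos : ∀ n, 0 ≤ a n) (ht : 0 ≤ t)
    (s0 : Summable fun k => a k * t ^ k) (s1 : Summable fun k : ℕ => (k : ℝ) * a k * t ^ k)
    (s2 : Summable fun k : ℕ => (k : ℝ) ^ 2 * a k * t ^ k) (hS0 : 0 < ∑' k, a k * t ^ k)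
    {m n : ℕ} (hmn : m ≤ n) (hgap : ∀ j, m < j → j < n → a j = 0)
    (hmean : meanK a t = ((m : ℝ) + n) / 2) : (((n : ℝ) - m) / 2) ^ 2 ≤ varK a t := by
  refine le_varK_of_forall_le_sq hpos ht s0 s1 s2 hS0 fun k hak => ?_
  have hmn' : (m : ℝ) ≤ n := by exact_mod_cast hmn
  rw [hmean]
  rcases le_or_gt k m with hk | hk
  · have : (k : ℝ) ≤ m := by exact_mod_cast hk
    nlinarith
  · have : (n : ℝ) ≤ k := by exact_mod_cast not_lt.mp fun hkn => hak (hgap k hk hkn)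
    nlinarith

end PowerSeries

lemma sub_div_add_le_sub_div_add {c x y : ℝ} (hc : 0 < c + 1) (hx : 0 ≤ x) (hxy : x < y)
    (h : c * x ≤ y) : (c - 1) / (c + 1) ≤ (y - x) / (y + x) := by
  rw [div_le_div_iff₀ hc (by linarith)]
  linarith

section Radius

variable {a : ℕ → ℝ} {R : ℝ≥0∞}

lemma summable_pow_mul_mul_pow (hpos : ∀ n, 0 ≤ a n)
    (hconv : ∀ t : ℝ, 0 ≤ t → ENNReal.ofReal t < R → Summable fun n => a n * t ^ n)
    {t : ℝ} (ht : 0 ≤ t) (htR : ENNReal.ofReal t < R) (k : ℕ) :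
    Summable fun n : ℕ => (n : ℝ) ^ k * a n * t ^ n := by
  obtain ⟨r, htr, hrR⟩ := exists_between htR
  have hr : r ≠ ⊤ := (hrR.trans_le le_top).ne
  refine summable_pow_mul_mul_pow_of_lt hpos (hconv r.toReal ENNReal.toReal_nonneg ?_) ht ?_ k
  · rwa [ENNReal.ofReal_toReal hr]
  · exact (ENNReal.ofReal_lt_iff_lt_toReal ht hr).mp htr

lemma sub_div_add_le_sdK_div_meanK_of_gap (hpos : ∀ n, 0 ≤ a n) (ha0 : 0 < a 0)
    (hconv : ∀ t : ℝ, 0 ≤ t → ENNReal.ofReal t < R → Summable fun n => a n * t ^ n)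
    {t : ℝ} (ht : 0 ≤ t) (htR : ENNReal.ofReal t < R)
    {m n : ℕ} (hmn : m < n) (hgap : ∀ j, m < j → j < n → a j = 0)
    (hmean : meanK a t = ((m : ℝ) + n) / 2) :
    ((n : ℝ) - m) / (n + m) ≤ sdK a t / meanK a t := by
  have s0 := hconv t ht htR
  have hvar := sq_half_sub_le_varK_of_gap hpos ht s0
    (by simpa using summable_pow_mul_mul_pow hpos hconv ht htR 1)
    (summable_pow_mul_mul_pow hpos hconv ht htR 2) (tsum_mul_pow_pos hpos ha0 s0 ht)
    hmn.le hgap hmean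
  have hmn' : (m : ℝ) < n := by exact_mod_cast hmn
  have hmean_pos : 0 < meanK a t := by rw [hmean]; linarith [(m.cast_nonneg : (0 : ℝ) ≤ m)]
  calc ((n : ℝ) - m) / (n + m) = (((n : ℝ) - m) / 2) / meanK a t := by
        rw [hmean]; field_simp; ring
    _ ≤ sdK a t / meanK a t := by gcongr; exact Real.le_sqrt_of_sq_le hvar

lemma exists_mem_Icc_sub_div_add_le_sdK_div_meanK (hpos : ∀ n, 0 ≤ a n) (ha0 : 0 < a 0)
    (hconv : ∀ t : ℝ, 0 ≤ t → ENNReal.ofReal t < R → Summable fun n => a n * t ^ n)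
    {t₀ t₁ : ℝ} (ht₀ : 0 ≤ t₀) (ht₀₁ : t₀ ≤ t₁) (ht₁R : ENNReal.ofReal t₁ < R)
    {m n : ℕ} (hmn : m < n) (hgap : ∀ j, m < j → j < n → a j = 0)
    (hmean₀ : meanK a t₀ ≤ ((m : ℝ) + n) / 2) (hmean₁ : ((m : ℝ) + n) / 2 ≤ meanK a t₁) :
    ∃ τ ∈ Set.Icc t₀ t₁, ((n : ℝ) - m) / (n + m) ≤ sdK a τ / meanK a τ := by
  have ht₁ : 0 ≤ t₁ := ht₀.trans ht₀₁
  have hcont := meanK_continuousOn hpos ha0 (hconv t₁ ht₁ ht₁R)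
    (by simpa using summable_pow_mul_mul_pow hpos hconv ht₁ ht₁R 1)
  obtain ⟨τ, hτ, hτmean⟩ := intermediate_value_Icc ht₀₁
    (hcont.mono (Set.Icc_subset_Icc_left ht₀)) ⟨hmean₀, hmean₁⟩
  exact ⟨τ, hτ, sub_div_add_le_sdK_div_meanK_of_gap hpos ha0 hconv (ht₀.trans hτ.1)
    ((ENNReal.ofReal_le_ofReal hτ.2).trans_lt ht₁R) hmn hgap hτmean⟩

end Radius

lemma nhdsUpto_hasBasis {R : ℝ≥0∞} (hR : 0 < R) :
    (nhdsUpto R).HasBasis (fun t₀ : ℝ => 0 ≤ t₀ ∧ ENNReal.ofReal t₀ < R)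
      fun t₀ => {t | t₀ ≤ t ∧ ENNReal.ofReal t < R} := by
  unfold nhdsUpto
  split_ifs with hRtop
  · simpa [hRtop, Set.Ici_def] using atTop_basis' (0 : ℝ)
  · have hr : 0 < R.toReal := ENNReal.toReal_pos hR.ne' hRtop
    have hlt : ∀ t : ℝ, 0 ≤ t → (ENNReal.ofReal t < R ↔ t < R.toReal) := fun t ht =>
      ENNReal.ofReal_lt_iff_lt_toReal ht hRtop
    refine (nhdsLT_basis_of_exists_lt ⟨0, hr⟩).to_hasBasis (fun b hb => ?_) fun t₀ ht₀ => ?_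
    · refine ⟨max ((b + R.toReal) / 2) 0, ⟨le_max_right _ _, (hlt _ (le_max_right _ _)).mpr
        (max_lt (by linarith) hr)⟩, fun t ht => ?_⟩
      have ht0 : 0 ≤ t := (le_max_right _ _).trans ht.1
      exact ⟨by linarith [le_max_left ((b + R.toReal) / 2) 0, ht.1], (hlt t ht0).mp ht.2⟩
    · refine ⟨t₀, (hlt t₀ ht₀.1).mp ht₀.2, fun t ht => ⟨ht.1.le, ?_⟩⟩
      exact (hlt t (ht₀.1.trans ht.1.le)).mpr ht.2

lemma frequently_le_sdK_div_meanK {a : ℕ → ℝ} {R : ℝ≥0∞} (hR : 0 < R)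
    (hpos : ∀ n, 0 ≤ a n) (ha0 : 0 < a 0)
    (hconv : ∀ t : ℝ, 0 ≤ t → ENNReal.ofReal t < R → Summable fun n => a n * t ^ n)
    (hM : Tendsto (meanK a) (nhdsUpto R) atTop) {c : ℝ} (hc : 0 < c + 1)
    (hgaps : ∀ N : ℕ, ∃ m n : ℕ, N ≤ m ∧ m < n ∧ (∀ j, m < j → j < n → a j = 0) ∧
      c * m ≤ n) :
    ∃ᶠ t in nhdsUpto R, (c - 1) / (c + 1) ≤ sdK a t / meanK a t := by
  have hbasis := nhdsUpto_hasBasis hR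
  rw [hbasis.frequently_iff]
  rintro t₀ ⟨ht₀, ht₀R⟩
  obtain ⟨m, n, hNm, hmn, hgap, hcmn⟩ := hgaps ⌈meanK a t₀⌉₊
  have hmn' : (m : ℝ) < n := by exact_mod_cast hmn
  have hmean₀ : meanK a t₀ ≤ ((m : ℝ) + n) / 2 := by
    have : meanK a t₀ ≤ m := (Nat.le_ceil _).trans (by exact_mod_cast hNm)
    linarith
  obtain ⟨t₂, ⟨-, ht₂R⟩, hfar⟩ := hbasis.eventually_iff.mp
    (hM.eventually_ge_atTop (((m : ℝ) + n) / 2))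
  have ht₁R : ENNReal.ofReal (max t₀ t₂) < R := by
    rw [ENNReal.ofReal_max]; exact max_lt ht₀R ht₂R
  obtain ⟨τ, hτ, hle⟩ := exists_mem_Icc_sub_div_add_le_sdK_div_meanK hpos ha0 hconv ht₀
    (le_max_left t₀ t₂) ht₁R hmn hgap hmean₀ (hfar ⟨le_max_right t₀ t₂, ht₁R⟩)
  exact ⟨τ, ⟨hτ.1, (ENNReal.ofReal_le_ofReal hτ.2).trans_lt ht₁R⟩,
    (sub_div_add_le_sub_div_add hc m.cast_nonneg hmn' hcmn).trans hle⟩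

theorem statement6_general (a : ℕ → ℝ) (R : ℝ≥0∞) (hR : 0 < R)
    (hpos : ∀ n, 0 ≤ a n) (ha0 : 0 < a 0)
    (hconv : ∀ t : ℝ, 0 ≤ t → ENNReal.ofReal t < R → Summable fun n => a n * t ^ n)
    (hM : Tendsto (meanK a) (nhdsUpto R) atTop) :
    ∀ c : ℝ, 1 ≤ c →
      (∀ ε : ℝ, 0 < ε → ∀ N : ℕ, ∃ m n : ℕ, N ≤ m ∧ m < n ∧ a m ≠ 0 ∧ a n ≠ 0 ∧
          (∀ j, m < j → j < n → a j = 0) ∧ (c - ε) * (m : ℝ) ≤ (n : ℝ)) →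
      (((c - 1) / (c + 1) : ℝ) : EReal) ≤
        Filter.limsup (fun t : ℝ => ((sdK a t / meanK a t : ℝ) : EReal)) (nhdsUpto R) := by
  intro c hc hfreq
  have hbound : ∀ ε ∈ Set.Ioo (0 : ℝ) 1, (((c - ε - 1) / (c - ε + 1) : ℝ) : EReal) ≤
      limsup (fun t : ℝ => ((sdK a t / meanK a t : ℝ) : EReal)) (nhdsUpto R) := by
    rintro ε ⟨hε₀, hε₁⟩
    refine le_limsup_of_frequently_le ?_ (isBoundedUnder_of ⟨⊤, fun _ => le_top⟩)
    refine (frequently_le_sdK_div_meanK hR hpos ha0 hconv hM (by linarith) fun N => ?_).mono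
      fun t ht => EReal.coe_le_coe_iff.mpr ht
    obtain ⟨m, n, hNm, hmn, -, -, hgap, hcmn⟩ := hfreq ε hε₀ N
    exact ⟨m, n, hNm, hmn, hgap, hcmn⟩
  have hcont : ContinuousAt (fun ε : ℝ => (((c - ε - 1) / (c - ε + 1) : ℝ) : EReal)) 0 :=
    continuous_coe_real_ereal.continuousAt.comp <|
      ContinuousAt.div (by fun_prop) (by fun_prop) (by norm_num; linarith)
  refine le_of_tendsto (by simpa using hcont.tendsto.mono_left nhdsWithin_le_nhds)
    (eventually_of_mem (Ioo_mem_nhdsGT one_pos) hbound)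

/-- Theorem 2.4.4. Let `f ∈ K` with radius of convergence `R > 0`, not a
polynomial, with `M_f = +∞`. For every real `c ≥ 1` such that `limsup_k n_{k+1}/n_k ≥ c`
(expressed below: for every `ε > 0` there are arbitrarily far out consecutive nonzero
indices `m < n` with `n ≥ (c-ε)·m`), one has
`limsup_{t↑R} σ_f(t)/m_f(t) ≥ (c-1)/(c+1)` (limsup taken in `EReal`). -/
theorem statement6 (a : ℕ → ℝ) (R : ℝ≥0∞) (hR : 0 < R)
    (hpos : ∀ n, 0 ≤ a n) (ha0 : 0 < a 0) (ha1 : ∃ n, 1 ≤ n ∧ 0 < a n)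
    (hconv : ∀ t : ℝ, 0 ≤ t → ENNReal.ofReal t < R → Summable fun n => a n * t ^ n)
    (hdiv : ∀ t : ℝ, R < ENNReal.ofReal t → ¬ Summable fun n => a n * t ^ n)
    (hnotpoly : ¬ ∃ N : ℕ, ∀ n, N < n → a n = 0)
    (hM : Tendsto (meanK a) (nhdsUpto R) atTop) :
    ∀ c : ℝ, 1 ≤ c →
      (∀ ε : ℝ, 0 < ε → ∀ N : ℕ, ∃ m n : ℕ, N ≤ m ∧ m < n ∧ a m ≠ 0 ∧ a n ≠ 0 ∧
          (∀ j, m < j → j < n → a j = 0) ∧ (c - ε) * (m : ℝ) ≤ (n : ℝ)) →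
      (((c - 1) / (c + 1) : ℝ) : EReal) ≤
        Filter.limsup (fun t : ℝ => ((sdK a t / meanK a t : ℝ) : EReal)) (nhdsUpto R) :=
  statement6_general a R hR hpos ha0 hconv hM
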